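/- arXiv:2103.17140 — 3 statements merged into one kernel-verified Lean document; each statement's English description precedes it below -/
import Mathlib

section
/- For every even integer n ≥ 1 and every S ⊆ Z_n such that no k ∈ Z_n satisfies both k ∈ S and −k ∈ S, the oriented circulant graph C(n,S) is not a deeply critical oriented clique. -/
/-- An oriented graph: a directed graph whose arc relation is irreflexive and
antisymmetric (no loops, and never both arcs `xy` and `yx`). -/
structure OrientedGraph (V : Type) where
  adj : V → V → Prop
  irrefl : ∀ v, ¬ adj v v
  antisymm : ∀ u v, adj u v → ¬ adj v u

namespace OrientedGraph

variable {V : Type}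

/-- An oriented `k`-colouring of `G`. -/
def IsColoring (G : OrientedGraph V) {k : ℕ} (φ : V → Fin k) : Prop :=
  (∀ x y, G.adj x y → φ x ≠ φ y) ∧
  (∀ x y u v, G.adj x y → G.adj u v → φ x = φ v → φ y ≠ φ u)

/-- The oriented chromatic number: the least `k` admitting an oriented `k`-colouring. -/
noncomputable def chromNum (G : OrientedGraph V) : ℕ :=
  sInf {k : ℕ | ∃ φ : V → Fin k, G.IsColoring φ}

/-- `G` with the arc `xy` removed. -/
def deleteArc (G : OrientedGraph V) (x y : V) : OrientedGraph V where
  adj a b := G.adj a b ∧ ¬(a = x ∧ b = y)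
  irrefl v h := G.irrefl v h.1
  antisymm u v h h' := G.antisymm u v h.1 h'.1

/-- An absolute oriented clique: `χo(G) = |V(G)|`. -/
def IsAbsoluteClique (G : OrientedGraph V) : Prop :=
  G.chromNum = Nat.card V

/-- A deeply critical oriented graph: removing any arc drops `χo` by exactly 2. -/
def IsDeeplyCritical (G : OrientedGraph V) : Prop :=
  ∀ x y, G.adj x y → (G.deleteArc x y).chromNum = G.chromNum - 2

/-- A deeply critical oriented clique. -/
def IsDeeplyCriticalClique (G : OrientedGraph V) : Prop :=
  G.IsDeeplyCritical ∧ G.IsAbsoluteClique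

/-- An extending partition `X 0 ⊔ X 1 ⊔ X 2` of `G` (indices mod 3). -/
def IsExtendingPartition (G : OrientedGraph V) (X : Fin 3 → Set V) : Prop :=
  (∀ v : V, ∃! i : Fin 3, v ∈ X i) ∧
  (∀ i : Fin 3, ∀ u ∈ X (i + 1), ∀ v ∈ X i, ¬ G.adj u v) ∧
  (∀ i : Fin 3, ∀ u ∈ X i, ∃ v ∈ X (i + 1), {w | w ∈ X i ∧ G.adj w v} = {u}) ∧
  (∀ i : Fin 3, ∀ v ∈ X (i + 1), ∃ u ∈ X i, {w | w ∈ X (i + 1) ∧ G.adj u w} = {v})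

/-- An oriented graph is extendable when it admits an extending partition. -/
def Extendable (G : OrientedGraph V) : Prop :=
  ∃ X : Fin 3 → Set V, G.IsExtendingPartition X

/-- Induced subgraph on the vertices satisfying `P`. -/
def induce (G : OrientedGraph V) (P : V → Prop) : OrientedGraph {v // P v} where
  adj a b := G.adj a.1 b.1
  irrefl a := G.irrefl a.1
  antisymm a b h := G.antisymm a.1 b.1 h

end OrientedGraph

/-- The new vertex `xᵢ⁻` of the 6-extension (for `i ∈ Fin 3`, representing `X_{i+1}`). -/
abbrev xminus (i : Fin 3) : Fin 6 := ⟨2 * i.1, by omega⟩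

/-- The new vertex `xᵢ⁺` of the 6-extension. -/
abbrev xplus (i : Fin 3) : Fin 6 := ⟨2 * i.1 + 1, by omega⟩

/-- The arcs among the six new vertices:
`x₁⁻x₂⁺, x₁⁺x₂⁻, x₂⁻x₃⁺, x₂⁺x₃⁻, x₃⁻x₁⁺, x₃⁺x₁⁻`. -/
abbrev extraAdj (s t : Fin 6) : Prop :=
  ∃ i : Fin 3, (s = xminus i ∧ t = xplus (i + 1)) ∨ (s = xplus i ∧ t = xminus (i + 1))

lemma extra_irrefl : ∀ s : Fin 6, ¬ extraAdj s s := by decide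

lemma extra_antisymm : ∀ s t : Fin 6, extraAdj s t → ¬ extraAdj t s := by decide

/-- The 6-extension of `G` with respect to the partition `X`. -/
def sixExtension {V : Type} (G : OrientedGraph V) (X : Fin 3 → Set V) :
    OrientedGraph (V ⊕ Fin 6) where
  adj a b :=
    match a, b with
    | Sum.inl u, Sum.inl v => G.adj u v
    | Sum.inr s, Sum.inl v => ∃ i : Fin 3, s = xminus i ∧ v ∈ X i
    | Sum.inl u, Sum.inr s => ∃ i : Fin 3, s = xplus i ∧ u ∈ X i
    | Sum.inr s, Sum.inr t => extraAdj s t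
  irrefl v := by
    cases v with
    | inl u => exact G.irrefl u
    | inr s => exact extra_irrefl s
  antisymm a b h h' := by
    cases a with
    | inl u =>
      cases b with
      | inl v => exact G.antisymm u v h h'
      | inr s =>
        obtain ⟨i, hi, -⟩ := h
        obtain ⟨j, hj, -⟩ := h'
        have := congrArg Fin.val (hi.symm.trans hj)
        simp at this
        omega
    | inr s =>
      cases b with
      | inl v =>
        obtain ⟨i, hi, -⟩ := h
        obtain ⟨j, hj, -⟩ := h'
        have := congrArg Fin.val (hi.symm.trans hj)
        simp at this
        omega
      | inr t => exact extra_antisymm s t h h'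

/-- The 4-extension of `G`: the subgraph of the 6-extension induced by deleting
`x₁⁺` and `x₂⁻`. -/
def fourExtension {V : Type} (G : OrientedGraph V) (X : Fin 3 → Set V) :
    OrientedGraph {v : V ⊕ Fin 6 // v ≠ Sum.inr (xplus 0) ∧ v ≠ Sum.inr (xminus 1)} :=
  (sixExtension G X).induce _

/-- The 2-extension of `G`: the subgraph of the 6-extension induced by deleting
`x₁⁻`, `x₂⁺`, `x₃⁻` and `x₃⁺`. -/
def twoExtension {V : Type} (G : OrientedGraph V) (X : Fin 3 → Set V) :
    OrientedGraph {v : V ⊕ Fin 6 //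
      v ≠ Sum.inr (xminus 0) ∧ v ≠ Sum.inr (xplus 1) ∧
      v ≠ Sum.inr (xminus 2) ∧ v ≠ Sum.inr (xplus 2)} :=
  (sixExtension G X).induce _

/-- The oriented circulant graph `C(n, S)`: vertex set `ZMod n`, with an arc from `i`
to `j` whenever `j - i ∈ S`. -/
def circulant (n : ℕ) (S : Set (ZMod n)) (hS : ∀ k : ZMod n, k ∈ S → -k ∉ S) :
    OrientedGraph (ZMod n) where
  adj i j := j - i ∈ S
  irrefl i h := hS (i - i) h (by simpa using h)
  antisymm i j h h' := hS (j - i) h (by simpa [neg_sub] using h')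

/-!
Call `y` reachable in two steps from `x` when there is an arc `xy` or a directed path
`x → w → y`. In an absolute oriented clique any two distinct vertices are joined this way in some
direction, since otherwise they could share a colour. Deleting an arc `xy` of a deeply critical
clique leaves an oriented colouring with `|V| - 2` colours, so some `b ∉ {x, y}` shares the colour
of `y`; checking which two-step connections survive the deletion forces `b → x → y` to be the only
one between `b` and `y`.

In `C(2m, S)` the vertices `0` and `m` are not adjacent (as `m = -m`), so `m = u + v` with
`u, v ∈ S`. Applied to the arc `0 → u`, the above gives `b = -u` (as `b → b + u → u` is a path),
while `u → m → -u` is a path from `u` to `b`.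
-/

namespace OrientedGraph

variable {V : Type}

def Reach2 (G : OrientedGraph V) (a c : V) : Prop :=
  G.adj a c ∨ ∃ w, G.adj a w ∧ G.adj w c

variable {G : OrientedGraph V}

theorem ne_of_adj {a c : V} (h : G.adj a c) : a ≠ c :=
  fun hac => G.irrefl c (hac ▸ h)

theorem isColoring_of_injective {k : ℕ} {φ : V → Fin k} (hφ : Function.Injective φ) :
    G.IsColoring φ :=
  ⟨fun _ _ hxy h => ne_of_adj hxy (hφ h),
    fun x y _ _ hxy huv h h' => G.antisymm x y hxy (hφ h ▸ hφ h' ▸ huv)⟩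

theorem exists_isColoring_chromNum [Finite V] (G : OrientedGraph V) :
    ∃ φ : V → Fin G.chromNum, G.IsColoring φ :=
  Nat.sInf_mem (s := {k | ∃ φ : V → Fin k, G.IsColoring φ})
    ⟨_, _, isColoring_of_injective (Finite.equivFin V).injective⟩

theorem chromNum_le_card_of_map {W : Type} [Finite W] (f : V → W)
    (h₁ : ∀ x y, G.adj x y → f x ≠ f y)
    (h₂ : ∀ x y u v, G.adj x y → G.adj u v → f x = f v → f y ≠ f u) :
    G.chromNum ≤ Nat.card W := by
  refine Nat.sInf_le ⟨Finite.equivFin W ∘ f, fun x y hxy => ?_, fun x y u v hxy huv => ?_⟩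
  · simpa using h₁ x y hxy
  · simpa using h₂ x y u v hxy huv

theorem IsColoring.ne_of_reach2 {k : ℕ} {φ : V → Fin k} (hφ : G.IsColoring φ) {a c : V}
    (h : G.Reach2 a c) : φ a ≠ φ c := by
  rcases h with h | ⟨w, haw, hwc⟩
  · exact hφ.1 a c h
  · exact fun hac => hφ.2 a w w c haw hwc hac rfl

theorem deleteArc_adj_of_ne_left {x y a c : V} (h : G.adj a c) (ha : a ≠ x) :
    (G.deleteArc x y).adj a c :=
  ⟨h, fun h' => ha h'.1⟩

theorem deleteArc_adj_of_ne_right {x y a c : V} (h : G.adj a c) (hc : c ≠ y) :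
    (G.deleteArc x y).adj a c :=
  ⟨h, fun h' => hc h'.2⟩

theorem Reach2.deleteArc {x y a c : V} (h : G.Reach2 a c) (ha : a ≠ x) (hc : c ≠ y) :
    (G.deleteArc x y).Reach2 a c := by
  rcases h with h | ⟨w, haw, hwc⟩
  · exact .inl (deleteArc_adj_of_ne_left h ha)
  · exact .inr ⟨w, deleteArc_adj_of_ne_left haw ha, deleteArc_adj_of_ne_right hwc hc⟩

theorem chromNum_le_card_sub_one [Fintype V] [DecidableEq V] {x y : V} (hxy : x ≠ y)
    (hxy' : ¬ (G.Reach2 x y ∨ G.Reach2 y x)) : G.chromNum ≤ Fintype.card V - 1 := by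
  have hsep : ∀ a c, s(a, c) = s(x, y) → ¬ G.Reach2 a c := by
    intro a c hac
    rcases Sym2.eq_iff.1 hac with ⟨rfl, rfl⟩ | ⟨rfl, rfl⟩ <;> tauto
  let f : V → {z // z ≠ y} := fun z => if hz : z = y then ⟨x, hxy⟩ else ⟨z, hz⟩
  have hf : ∀ a c, f a = f c → a = c ∨ s(a, c) = s(x, y) := by
    intro a c hac
    by_cases ha : a = y <;> by_cases hc : c = y <;> simp_all [f, Subtype.ext_iff]
  have hcard : Nat.card {z // z ≠ y} = Fintype.card V - 1 := by
    simp [Nat.card_eq_fintype_card, Fintype.card_subtype_compl]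
  refine hcard ▸ G.chromNum_le_card_of_map f
    (fun a c hac h => ?_) (fun a b c d hab hcd h h' => ?_)
  · rcases hf a c h with rfl | h
    · exact G.irrefl a hac
    · exact hsep a c h (.inl hac)
  · rcases hf a d h with rfl | had <;> rcases hf b c h' with rfl | hbc
    · exact G.antisymm a b hab hcd
    · exact hsep c b (by rw [Sym2.eq_swap, hbc]) (.inr ⟨a, hcd, hab⟩)
    · exact hsep a d had (.inr ⟨b, hab, hcd⟩)
    · rcases Sym2.eq_iff.1 had with ⟨rfl, rfl⟩ | ⟨rfl, rfl⟩ <;>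
        rcases Sym2.eq_iff.1 hbc with ⟨rfl, rfl⟩ | ⟨rfl, rfl⟩
      all_goals first
        | exact G.irrefl _ hab
        | exact hsep _ _ rfl (.inl hab)
        | exact hsep _ _ Sym2.eq_swap (.inl hab)

theorem IsAbsoluteClique.reach2_or_reach2 [Fintype V] [DecidableEq V]
    (hG : G.IsAbsoluteClique) {x y : V} (hxy : x ≠ y) : G.Reach2 x y ∨ G.Reach2 y x := by
  by_contra hxy'
  have hle := chromNum_le_card_sub_one hxy hxy'
  rw [hG, Nat.card_eq_fintype_card] at hle
  have := Fintype.card_pos_iff.2 ⟨x⟩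
  omega

theorem IsAbsoluteClique.deleteArc_color_ne [Fintype V] [DecidableEq V]
    (hG : G.IsAbsoluteClique) {x y : V} {k : ℕ} {φ : V → Fin k}
    (hφ : (G.deleteArc x y).IsColoring φ) {a c : V} (hac : a ≠ c)
    (hax : a ≠ x) (hay : a ≠ y) (hcx : c ≠ x) (hcy : c ≠ y) : φ a ≠ φ c := by
  rcases hG.reach2_or_reach2 hac with h | h
  · exact hφ.ne_of_reach2 (h.deleteArc hax hcy)
  · exact (hφ.ne_of_reach2 (h.deleteArc hcx hay)).symm

theorem IsAbsoluteClique.exists_color_eq_of_deleteArc [Fintype V] [DecidableEq V]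
    (hG : G.IsAbsoluteClique) {x y : V} (hxy : G.adj x y)
    {φ : V → Fin (Fintype.card V - 2)} (hφ : (G.deleteArc x y).IsColoring φ) :
    ∃ b, b ≠ x ∧ b ≠ y ∧ φ b = φ y := by
  have hcard : Fintype.card V - 2 < Fintype.card {z // z ≠ x} := by
    have : 0 < Fintype.card {z // z ≠ x} :=
      Fintype.card_pos_iff.2 ⟨⟨y, (ne_of_adj hxy).symm⟩⟩
    simp only [Fintype.card_subtype_compl, Fintype.card_unique] at this ⊢
    omega
  obtain ⟨⟨b, hbx⟩, ⟨c, hcx⟩, hbc, hφbc⟩ :=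
    Fintype.exists_ne_map_eq_of_card_lt (fun z : {z // z ≠ x} => φ z) (by rwa [Fintype.card_fin])
  have hbc : b ≠ c := fun h => hbc (Subtype.ext h)
  by_cases hcy : c = y
  · exact ⟨b, hbx, hcy ▸ hbc, hcy ▸ hφbc⟩
  by_cases hby : b = y
  · exact ⟨c, hcx, hby ▸ hbc.symm, hby ▸ hφbc.symm⟩
  exact absurd hφbc (hG.deleteArc_color_ne hφ hbc hbx hby hcx hcy)

theorem IsDeeplyCriticalClique.exists_adj_of_adj [Fintype V] [DecidableEq V]
    (hG : G.IsDeeplyCriticalClique) {x y : V} (hxy : G.adj x y) :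
    ∃ b, G.adj b x ∧ ¬ G.Reach2 y b ∧ ∀ w, G.adj b w → G.adj w y → w = x := by
  obtain ⟨φ, hφ⟩ : ∃ φ : V → Fin (Fintype.card V - 2), (G.deleteArc x y).IsColoring φ := by
    have := (G.deleteArc x y).exists_isColoring_chromNum
    rwa [hG.1 x y hxy, hG.2, Nat.card_eq_fintype_card] at this
  obtain ⟨b, hbx, hby, hb⟩ := hG.2.exists_color_eq_of_deleteArc hxy hφ
  have hyb : ¬ G.Reach2 y b := fun h =>
    hφ.ne_of_reach2 (h.deleteArc (ne_of_adj hxy).symm hby) hb.symm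
  have hpath : ∀ w, G.adj b w → G.adj w y → w = x := fun w hbw hwy => by
    by_contra hwx
    exact hφ.ne_of_reach2
      (.inr ⟨w, deleteArc_adj_of_ne_left hbw hbx, deleteArc_adj_of_ne_left hwy hwx⟩) hb
  refine ⟨b, ?_, hyb, hpath⟩
  rcases (hG.2.reach2_or_reach2 hby).resolve_right hyb with h | ⟨w, hbw, hwy⟩
  · exact absurd hb (hφ.1 b y (deleteArc_adj_of_ne_left h hbx))
  · exact hpath w hbw hwy ▸ hbw

end OrientedGraph

section Circulant

open OrientedGraph

variable {n : ℕ} {S : Set (ZMod n)} {hS : ∀ k : ZMod n, k ∈ S → -k ∉ S}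

@[simp]
theorem circulant_adj {i j : ZMod n} : (circulant n S hS).adj i j ↔ j - i ∈ S :=
  Iff.rfl

theorem circulant_reach2_neg {h u v : ZMod n} (hh : h + h = 0) (hv : v ∈ S)
    (huv : u + v = h) : (circulant n S hS).Reach2 u (-u) :=
  .inr ⟨h, by rwa [circulant_adj, ← huv, add_sub_cancel_left], by
    rw [circulant_adj]; convert hv using 1; linear_combination -huv - hh⟩

theorem exists_add_eq_of_isAbsoluteClique [NeZero n] (hG : (circulant n S hS).IsAbsoluteClique)
    {h : ZMod n} (hh : h + h = 0) (h0 : h ≠ 0) : ∃ u v, u ∈ S ∧ v ∈ S ∧ u + v = h := by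
  have hneg : -h = h := neg_eq_of_add_eq_zero_left hh
  have hnot : h ∉ S := fun hmem => hS h hmem (by rwa [hneg])
  rcases hG.reach2_or_reach2 h0.symm with (h' | ⟨w, h0w, hwh⟩) | (h' | ⟨w, hhw, hw0⟩)
  · exact absurd (by simpa using h') hnot
  · exact ⟨w, h - w, by simpa using h0w, hwh, add_sub_cancel w h⟩
  · exact absurd (by simpa [hneg] using h') hnot
  · exact ⟨-w, w - h, by simpa using hw0, hhw, by linear_combination -hh⟩

end Circulant

/-- For every even `n ≥ 1` and every admissible `S ⊆ ZMod n`, the oriented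
circulant graph `C(n, S)` is not a deeply critical oriented clique. -/
theorem stmt2 (n : ℕ) (hn : 1 ≤ n) (hev : Even n) (S : Set (ZMod n))
    (hS : ∀ k : ZMod n, k ∈ S → -k ∉ S) :
    ¬ (circulant n S hS).IsDeeplyCriticalClique := by
  intro hG
  obtain ⟨m, rfl⟩ := hev
  have : NeZero (m + m) := ⟨by omega⟩
  have hm : (m : ZMod (m + m)) + m = 0 := by exact_mod_cast ZMod.natCast_self (m + m)
  have hm0 : (m : ZMod (m + m)) ≠ 0 := by
    rw [Ne, ZMod.natCast_eq_zero_iff]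
    exact Nat.not_dvd_of_pos_of_lt (by omega) (by omega)
  obtain ⟨u, v, hu, hv, huv⟩ := exists_add_eq_of_isAbsoluteClique hG.2 hm hm0
  obtain ⟨b, hb0, hub, hpath⟩ := hG.exists_adj_of_adj (x := 0) (y := u) (by simpa using hu)
  have hb : b + u = 0 := hpath (b + u) (by simpa using hu) (by simpa using hb0)
  rw [eq_neg_of_add_eq_zero_left hb] at hub
  exact hub (circulant_reach2_neg hm hv huv)
end

section
/- If G is a deeply critical oriented clique with extending partition X1 ⊔ X2 ⊔ X3 and G6 is the 6-extension of G with respect to this partition, then the partition of V(G6) into the parts X1' = X1 ∪ {x1⁻, x1⁺}, X2' = X2 ∪ {x2⁻, x2⁺}, X3' = X3 ∪ {x3⁻, x3⁺} is an extending partition of G6; in particular, G6 is extendable. -/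
/-! The vertices of `G` keep the witnesses they have for `X`: within the enlarged parts, the only
new arcs at an old vertex `v ∈ Xᵢ` come from `xᵢ⁻` and go to `xᵢ⁺`, which sit in the part of `v`
itself and so never touch a neighbourhood taken in an adjacent part. The six new vertices form
the directed 6-cycle `x₁⁻ x₂⁺ x₃⁻ x₁⁺ x₂⁻ x₃⁺`, whose consecutive vertices lie in consecutive
parts, so each new vertex is witnessed by its successor and its predecessor on that cycle. -/

lemma xminus_injective : Function.Injective xminus := by decide

lemma xplus_injective : Function.Injective xplus := by decide

lemma xminus_ne_xplus (i j : Fin 3) : xminus i ≠ xplus j := by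
  revert i j; decide

lemma existsUnique_eq_xminus_or_eq_xplus (s : Fin 6) :
    ∃! i : Fin 3, s = xminus i ∨ s = xplus i := by
  revert s; simp only [ExistsUnique]; decide

lemma extraAdj_xminus_iff (i : Fin 3) (t : Fin 6) : extraAdj (xminus i) t ↔ t = xplus (i + 1) := by
  revert i t; decide

lemma extraAdj_xplus_iff (i : Fin 3) (t : Fin 6) : extraAdj (xplus i) t ↔ t = xminus (i + 1) := by
  revert i t; decide

lemma extraAdj_iff_xminus (s : Fin 6) (j : Fin 3) : extraAdj s (xminus j) ↔ s = xplus (j - 1) := by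
  revert s j; decide

lemma extraAdj_iff_xplus (s : Fin 6) (j : Fin 3) : extraAdj s (xplus j) ↔ s = xminus (j - 1) := by
  revert s j; decide

lemma not_extraAdj_of_mem_add_one (i : Fin 3) (s t : Fin 6)
    (hs : s = xminus (i + 1) ∨ s = xplus (i + 1)) (ht : t = xminus i ∨ t = xplus i) :
    ¬ extraAdj s t := by
  revert i s t; decide

namespace OrientedGraph.IsExtendingPartition

variable {V : Type} {G : OrientedGraph V} {X : Fin 3 → Set V}

lemma eq_of_mem (hX : G.IsExtendingPartition X) {v : V} {i j : Fin 3} (hi : v ∈ X i)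
    (hj : v ∈ X j) : i = j :=
  (hX.1 v).unique hi hj

lemma notMem_add_one (hX : G.IsExtendingPartition X) {v : V} {i : Fin 3} (hv : v ∈ X i) :
    v ∉ X (i + 1) :=
  fun hv' => add_ne_left.2 one_ne_zero (hX.eq_of_mem hv' hv)

lemma notMem_of_mem_add_one (hX : G.IsExtendingPartition X) {v : V} {i : Fin 3}
    (hv : v ∈ X (i + 1)) : v ∉ X i :=
  fun hv' => hX.notMem_add_one hv' hv

end OrientedGraph.IsExtendingPartition

namespace sixExtension

variable {V : Type} {G : OrientedGraph V} {X : Fin 3 → Set V}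

def parts (X : Fin 3 → Set V) (i : Fin 3) : Set (V ⊕ Fin 6) :=
  Sum.inl '' X i ∪ {Sum.inr (xminus i), Sum.inr (xplus i)}

@[simp] lemma inl_mem_parts {v : V} {i : Fin 3} : Sum.inl v ∈ parts X i ↔ v ∈ X i := by
  simp [parts]

@[simp] lemma inr_mem_parts {s : Fin 6} {i : Fin 3} :
    Sum.inr s ∈ parts X i ↔ s = xminus i ∨ s = xplus i := by
  simp [parts]

@[simp] lemma adj_inl_inl {u v : V} : (sixExtension G X).adj (.inl u) (.inl v) ↔ G.adj u v :=
  Iff.rfl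

@[simp] lemma adj_xminus_inl {v : V} {i : Fin 3} :
    (sixExtension G X).adj (.inr (xminus i)) (.inl v) ↔ v ∈ X i := by
  simp [sixExtension, xminus_injective.eq_iff]

@[simp] lemma not_adj_xplus_inl {v : V} {i : Fin 3} :
    ¬ (sixExtension G X).adj (.inr (xplus i)) (.inl v) :=
  fun ⟨j, hj, _⟩ => xminus_ne_xplus j i hj.symm

@[simp] lemma adj_inl_xplus {u : V} {i : Fin 3} :
    (sixExtension G X).adj (.inl u) (.inr (xplus i)) ↔ u ∈ X i := by
  simp [sixExtension, xplus_injective.eq_iff]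

@[simp] lemma not_adj_inl_xminus {u : V} {i : Fin 3} :
    ¬ (sixExtension G X).adj (.inl u) (.inr (xminus i)) :=
  fun ⟨j, hj, _⟩ => xminus_ne_xplus i j hj

@[simp] lemma adj_inr_inr {s t : Fin 6} : (sixExtension G X).adj (.inr s) (.inr t) ↔ extraAdj s t :=
  Iff.rfl

lemma existsUnique_mem_parts (hX : ∀ v, ∃! i, v ∈ X i) (w : V ⊕ Fin 6) :
    ∃! i, w ∈ parts X i := by
  cases w with
  | inl v => simpa using hX v
  | inr s => simpa using existsUnique_eq_xminus_or_eq_xplus s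

lemma not_adj_of_mem_add_one (hX : G.IsExtendingPartition X) (i : Fin 3) :
    ∀ u ∈ parts X (i + 1), ∀ v ∈ parts X i, ¬ (sixExtension G X).adj u v := by
  rintro (u | s) hu (v | t) hv <;> simp only [inl_mem_parts, inr_mem_parts] at hu hv
  · exact hX.2.1 i u hu v hv
  · rcases hv with rfl | rfl
    · exact not_adj_inl_xminus
    · simpa using hX.notMem_of_mem_add_one hu
  · rcases hu with rfl | rfl
    · simpa using hX.notMem_add_one hv
    · exact not_adj_xplus_inl
  · exact not_extraAdj_of_mem_add_one i s t hu hv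

lemma inNbhd_inl {v : V} {i : Fin 3} (hv : v ∉ X i) :
    {w | w ∈ parts X i ∧ (sixExtension G X).adj w (.inl v)} =
      Sum.inl '' {w | w ∈ X i ∧ G.adj w v} := by
  ext (b | s)
  · simp
  · simp only [Set.mem_ofPred_eq, inr_mem_parts, Set.mem_image, reduceCtorEq, and_false,
      exists_false, iff_false, not_and]
    rintro (rfl | rfl)
    · simpa using hv
    · exact not_adj_xplus_inl

lemma outNbhd_inl {u : V} {j : Fin 3} (hu : u ∉ X j) :
    {w | w ∈ parts X j ∧ (sixExtension G X).adj (.inl u) w} =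
      Sum.inl '' {w | w ∈ X j ∧ G.adj u w} := by
  ext (b | s)
  · simp
  · simp only [Set.mem_ofPred_eq, inr_mem_parts, Set.mem_image, reduceCtorEq, and_false,
      exists_false, iff_false, not_and]
    rintro (rfl | rfl)
    · exact not_adj_inl_xminus
    · simpa using hu

lemma inNbhd_xplus (hX : G.IsExtendingPartition X) (i : Fin 3) :
    {w | w ∈ parts X i ∧ (sixExtension G X).adj w (.inr (xplus (i + 1)))} =
      {.inr (xminus i)} := by
  ext (b | s)
  · simpa using hX.notMem_add_one
  · simp +contextual [extraAdj_iff_xplus]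

lemma inNbhd_xminus (i : Fin 3) :
    {w | w ∈ parts X i ∧ (sixExtension G X).adj w (.inr (xminus (i + 1)))} =
      {.inr (xplus i)} := by
  ext (b | s)
  · simp
  · simp +contextual [extraAdj_iff_xminus]

lemma outNbhd_xminus (hX : G.IsExtendingPartition X) (i : Fin 3) :
    {w | w ∈ parts X (i + 1) ∧ (sixExtension G X).adj (.inr (xminus i)) w} =
      {.inr (xplus (i + 1))} := by
  ext (b | s)
  · simpa using hX.notMem_of_mem_add_one
  · simp +contextual [extraAdj_xminus_iff]

lemma outNbhd_xplus (i : Fin 3) :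
    {w | w ∈ parts X (i + 1) ∧ (sixExtension G X).adj (.inr (xplus i)) w} =
      {.inr (xminus (i + 1))} := by
  ext (b | s)
  · simp
  · simp +contextual [extraAdj_xplus_iff]

lemma exists_inNbhd_eq_singleton (hX : G.IsExtendingPartition X) (i : Fin 3) :
    ∀ u ∈ parts X i, ∃ v ∈ parts X (i + 1),
      {w | w ∈ parts X i ∧ (sixExtension G X).adj w v} = {u} := by
  rintro (a | s) hu
  · obtain ⟨v, hv, hnbhd⟩ := hX.2.2.1 i a (inl_mem_parts.1 hu)
    refine ⟨.inl v, inl_mem_parts.2 hv, ?_⟩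
    rw [inNbhd_inl (hX.notMem_of_mem_add_one hv), hnbhd, Set.image_singleton]
  · rcases inr_mem_parts.1 hu with rfl | rfl
    · exact ⟨.inr (xplus (i + 1)), by simp, inNbhd_xplus hX i⟩
    · exact ⟨.inr (xminus (i + 1)), by simp, inNbhd_xminus i⟩

lemma exists_outNbhd_eq_singleton (hX : G.IsExtendingPartition X) (i : Fin 3) :
    ∀ v ∈ parts X (i + 1), ∃ u ∈ parts X i,
      {w | w ∈ parts X (i + 1) ∧ (sixExtension G X).adj u w} = {v} := by
  rintro (b | t) hv
  · obtain ⟨u, hu, hnbhd⟩ := hX.2.2.2 i b (inl_mem_parts.1 hv)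
    refine ⟨.inl u, inl_mem_parts.2 hu, ?_⟩
    rw [outNbhd_inl (hX.notMem_add_one hu), hnbhd, Set.image_singleton]
  · rcases inr_mem_parts.1 hv with rfl | rfl
    · exact ⟨.inr (xplus i), by simp, outNbhd_xplus i⟩
    · exact ⟨.inr (xminus i), by simp, outNbhd_xminus hX i⟩

theorem isExtendingPartition_parts (hX : G.IsExtendingPartition X) :
    (sixExtension G X).IsExtendingPartition (parts X) :=
  ⟨existsUnique_mem_parts hX.1, not_adj_of_mem_add_one hX, exists_inNbhd_eq_singleton hX,
    exists_outNbhd_eq_singleton hX⟩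

end sixExtension

theorem stmt8_general {V : Type} (G : OrientedGraph V) (X : Fin 3 → Set V)
    (hX : G.IsExtendingPartition X) :
    (sixExtension G X).IsExtendingPartition
      (fun i => (Sum.inl '' X i) ∪ {Sum.inr (xminus i), Sum.inr (xplus i)}) ∧
    (sixExtension G X).Extendable :=
  ⟨sixExtension.isExtendingPartition_parts hX, _, sixExtension.isExtendingPartition_parts hX⟩

/-- the parts `Xᵢ' = Xᵢ ∪ {xᵢ⁻, xᵢ⁺}` form an extending partition of the
6-extension; in particular the 6-extension is extendable. -/
theorem stmt8 {V : Type} [Finite V] (G : OrientedGraph V) (X : Fin 3 → Set V)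
    (hG : G.IsDeeplyCriticalClique) (hX : G.IsExtendingPartition X) :
    (sixExtension G X).IsExtendingPartition
      (fun i => (Sum.inl '' X i) ∪ {Sum.inr (xminus i), Sum.inr (xplus i)}) ∧
    (sixExtension G X).Extendable :=
  stmt8_general G X hX
end

section
/- Let G be a deeply critical oriented clique on n vertices with extending partition X1 ⊔ X2 ⊔ X3, and let G6 be its 6-extension. Then χo(G6 − x1⁻x2⁺) ≤ (n + 6) − 2, i.e., the oriented graph obtained from G6 by deleting the arc x1⁻x2⁺ admits an oriented (n+4)-colouring. -/
namespace OrientedGraph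

variable {V W : Type}

lemma chromNum_le_of_isColoring (G : OrientedGraph V) {k : ℕ} {φ : V → Fin k}
    (hφ : G.IsColoring φ) : G.chromNum ≤ k :=
  Nat.sInf_le ⟨φ, hφ⟩

lemma isColoring_comp_of_map_adj {G : OrientedGraph V} {T : OrientedGraph W} {f : V → W}
    (hf : ∀ x y, G.adj x y → T.adj (f x) (f y)) {k : ℕ} {e : W → Fin k}
    (he : Function.Injective e) : G.IsColoring (e ∘ f) := by
  refine ⟨fun x y hxy hc => T.irrefl (f x) ?_, fun x y u v hxy huv hxv hyu => ?_⟩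
  · simpa [he hc] using hf x y hxy
  · have hfx : f x = f v := he hxv
    have hfy : f y = f u := he hyu
    exact T.antisymm _ _ (hf x y hxy) (hfx ▸ hfy ▸ hf u v huv)

lemma chromNum_le_card_of_map_adj [Fintype W] {G : OrientedGraph V} {T : OrientedGraph W}
    {f : V → W} (hf : ∀ x y, G.adj x y → T.adj (f x) (f y)) :
    G.chromNum ≤ Fintype.card W :=
  G.chromNum_le_of_isColoring (isColoring_comp_of_map_adj hf (Fintype.equivFin W).injective)

def sumOrient (G : OrientedGraph V) (T : OrientedGraph W) (S : Set W) :
    OrientedGraph (V ⊕ W) where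
  adj a b :=
    match a, b with
    | .inl u, .inl v => G.adj u v
    | .inr s, .inl _ => s ∈ S
    | .inl _, .inr t => t ∉ S
    | .inr s, .inr t => T.adj s t
  irrefl a := by
    cases a with
    | inl u => exact G.irrefl u
    | inr s => exact T.irrefl s
  antisymm a b h h' := by
    cases a <;> cases b
    · exact G.antisymm _ _ h h'
    · exact h h'
    · exact h' h
    · exact T.antisymm _ _ h h'

end OrientedGraph

def directedFourCycle : OrientedGraph (ZMod 4) :=
  circulant 4 {1} (by decide)

/-- The images of `x₁⁻, x₁⁺, x₂⁻, x₂⁺, x₃⁻, x₃⁺` (indices `0, …, 5` of `Fin 6`). -/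
def sixToCycle : Fin 6 → ZMod 4 := ![0, 1, 2, 3, 0, 3]

lemma sixToCycle_xminus_even : ∀ i : Fin 3, sixToCycle (xminus i) ∈ ({0, 2} : Set (ZMod 4)) := by
  decide

lemma sixToCycle_xplus_odd : ∀ i : Fin 3, sixToCycle (xplus i) ∉ ({0, 2} : Set (ZMod 4)) := by
  decide

lemma sixToCycle_map_adj : ∀ s t : Fin 6, extraAdj s t → ¬(s = xminus 0 ∧ t = xplus 1) →
    directedFourCycle.adj (sixToCycle s) (sixToCycle t) := by
  simp only [directedFourCycle, circulant, Set.mem_singleton_iff]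
  decide

lemma sixExtension_deleteArc_map_adj {n : ℕ} (G : OrientedGraph (Fin n)) (X : Fin 3 → Set (Fin n)) :
    ∀ a b, ((sixExtension G X).deleteArc (.inr (xminus 0)) (.inr (xplus 1))).adj a b →
      (G.sumOrient directedFourCycle {0, 2}).adj (Sum.map id sixToCycle a)
        (Sum.map id sixToCycle b) := by
  rintro (u | s) (v | t) ⟨hab, hne⟩
  · exact hab
  · obtain ⟨i, rfl, -⟩ := hab
    exact sixToCycle_xplus_odd i
  · obtain ⟨i, rfl, -⟩ := hab
    exact sixToCycle_xminus_even i
  · exact sixToCycle_map_adj s t hab (by simpa using hne)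

theorem stmt10_general (n : ℕ) (G : OrientedGraph (Fin n)) (X : Fin 3 → Set (Fin n)) :
    ((sixExtension G X).deleteArc (Sum.inr (xminus 0)) (Sum.inr (xplus 1))).chromNum
      ≤ (n + 6) - 2 := by
  have := OrientedGraph.chromNum_le_card_of_map_adj (sixExtension_deleteArc_map_adj G X)
  simpa [ZMod.card] using this

/-- deleting the arc `x₁⁻x₂⁺` from the 6-extension of a deeply critical
oriented clique on `n` vertices leaves oriented chromatic number at most `(n + 6) - 2`. -/
theorem stmt10 (n : ℕ) (G : OrientedGraph (Fin n)) (X : Fin 3 → Set (Fin n))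
    (hG : G.IsDeeplyCriticalClique) (hX : G.IsExtendingPartition X) :
    ((sixExtension G X).deleteArc (Sum.inr (xminus 0)) (Sum.inr (xplus 1))).chromNum
      ≤ (n + 6) - 2 :=
  stmt10_general n G X
end
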